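/- Assume γ < (1−η)/h. Let w* be an optimal solution of the convex relaxation and let j ∈ {2,…,n−1} be such that f_{j−1}(w*) < 0 and f_j(w*) > 0. Then w*_j = z_j. -/
import Mathlib


/-- The force f_i(w). -/
noncomputable def force (h γ g c : ℝ) (α : ℕ → ℝ) (w : ℕ → ℝ) (i : ℕ) : ℝ :=
  (w (i+1) - w i)/h + γ*(w i) + g*(Real.sin (α i) + c*Real.cos (α i))

/-- The objective function F of the convex relaxation. -/
noncomputable def Fobj (n : ℕ) (h γ g c M lam η : ℝ) (α : ℕ → ℝ) (w : ℕ → ℝ) : ℝ :=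
  (∑ j ∈ Finset.Icc 2 (n-1), (η*lam*M*γ*(w j) + 1/Real.sqrt (2*(w j))))
    + (1-η)*lam*M*(∑ j ∈ Finset.Icc 1 (n-1), max 0 (force h γ g c α w j))

/-- Membership in the domain D of the convex relaxation. -/
def memD (n : ℕ) (y z w : ℕ → ℝ) : Prop :=
  (∀ i, 1 ≤ i → i ≤ n → y i ≤ w i ∧ w i ≤ z i) ∧
    (∀ j, 2 ≤ j → j ≤ n - 1 → 0 < w j)

/-- w is an optimal solution of the convex relaxation. -/
def optSol (n : ℕ) (h γ g c M lam η : ℝ) (α y z : ℕ → ℝ) (w : ℕ → ℝ) : Prop :=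
  memD n y z w ∧ ∀ w' : ℕ → ℝ, memD n y z w' →
    Fobj n h γ g c M lam η α w ≤ Fobj n h γ g c M lam η α w'

/-- Reference speed w⁺ = (2λMγ)^{−2/3}. -/
noncomputable def wplus (lam M γ : ℝ) : ℝ := (2*lam*M*γ) ^ (-(2:ℝ)/3)

/-- Reference speed w⁻ = (2ηλMγ)^{−2/3}. -/
noncomputable def wminus (η lam M γ : ℝ) : ℝ := (2*η*lam*M*γ) ^ (-(2:ℝ)/3)


lemma sum_diff_one (s : Finset ℕ) (a : ℕ) (ha : a ∈ s) (f g : ℕ → ℝ)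
    (hfg : ∀ i ∈ s, i ≠ a → f i = g i) :
    ∑ i ∈ s, f i - ∑ i ∈ s, g i = f a - g a := by
  rw [← Finset.add_sum_erase s f ha, ← Finset.add_sum_erase s g ha,
    Finset.sum_congr rfl (fun i hi => hfg i (Finset.mem_of_mem_erase hi)
      (Finset.ne_of_mem_erase hi))]
  ring

lemma sum_diff_two (s : Finset ℕ) (a b : ℕ) (ha : a ∈ s) (hb : b ∈ s) (hab : a ≠ b)
    (f g : ℕ → ℝ) (hfg : ∀ i ∈ s, i ≠ a → i ≠ b → f i = g i) :
    ∑ i ∈ s, f i - ∑ i ∈ s, g i = (f a - g a) + (f b - g b) := by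
  have hb' : b ∈ s.erase a := Finset.mem_erase.mpr ⟨Ne.symm hab, hb⟩
  rw [← Finset.add_sum_erase s f ha, ← Finset.add_sum_erase s g ha,
    ← Finset.add_sum_erase _ f hb', ← Finset.add_sum_erase _ g hb',
    Finset.sum_congr rfl (fun i hi => hfg i
      (Finset.mem_of_mem_erase (Finset.mem_of_mem_erase hi))
      (Finset.ne_of_mem_erase (Finset.mem_of_mem_erase hi))
      (Finset.ne_of_mem_erase hi))]
  ring

theorem stmt12 (n : ℕ) (hn : 2 ≤ n) (h M g γ c lam η : ℝ)
    (hh : 0 < h) (hM : 0 < M) (hg : 0 < g)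
    (hγ0 : 0 < γ) (hhγ : h * γ < 1) (hc : 0 ≤ c)
    (hlam : 0 < lam) (hη0 : 0 < η) (hη1 : η < 1)
    (α : ℕ → ℝ)
    (win wfin : ℝ) (hwin : 0 ≤ win) (hwfin : 0 ≤ wfin)
    (y z : ℕ → ℝ) (hyz : ∀ i, 1 ≤ i → i ≤ n → y i ≤ z i)
    (hy1 : y 1 = win) (hz1 : z 1 = win) (hyn : y n = wfin) (hzn : z n = wfin)
    (hγη : γ < (1-η)/h)
    (wstar : ℕ → ℝ) (hopt : optSol n h γ g c M lam η α y z wstar)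
    (j : ℕ) (hj1 : 2 ≤ j) (hj2 : j ≤ n - 1)
    (hf1 : force h γ g c α wstar (j-1) < 0) (hf2 : 0 < force h γ g c α wstar j) :
    wstar j = z j := by
  -- suppose not
  by_contra hne
  obtain ⟨⟨hbox, hpos⟩, hmin⟩ := hopt
  have hjn : j ≤ n := by omega
  have hwjz : wstar j ≤ z j := (hbox j (by omega) hjn).2
  have hlt : wstar j < z j := lt_of_le_of_ne hwjz hne
  have hwj0 : 0 < wstar j := hpos j hj1 hj2
  have hd : 0 < 1/h - γ := by
    have : γ < 1/h := (lt_div_iff₀ hh).mpr (by linarith)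
    linarith
  set fjm := force h γ g c α wstar (j-1) with hfjm_def
  set fj := force h γ g c α wstar j with hfj_def
  set ε := min (z j - wstar j) (min (h * (-fjm)) ((1/h - γ)⁻¹ * fj)) with hε_def
  have hε0 : 0 < ε := by
    apply lt_min (by linarith)
    apply lt_min (by nlinarith)
    exact mul_pos (inv_pos.mpr hd) hf2
  have hεA : ε ≤ z j - wstar j := min_le_left _ _
  have hεB : ε ≤ h * (-fjm) := le_trans (min_le_right _ _) (min_le_left _ _)
  have hεC : ε ≤ (1/h - γ)⁻¹ * fj := le_trans (min_le_right _ _) (min_le_right _ _)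
  set w' : ℕ → ℝ := fun i => if i = j then wstar j + ε else wstar i with hw'_def
  have hw'j : w' j = wstar j + ε := by simp [hw'_def]
  have hw'ne : ∀ i, i ≠ j → w' i = wstar i := by
    intro i hi; simp [hw'_def, hi]
  -- w' is in the domain
  have hmem' : memD n y z w' := by
    constructor
    · intro i h1 h2
      by_cases hij : i = j
      · subst hij
        rw [hw'j]
        exact ⟨le_trans (hbox i h1 h2).1 (by linarith), by linarith⟩
      · rw [hw'ne i hij]; exact hbox i h1 h2
    · intro i h1 h2
      by_cases hij : i = j
      · subst hij; rw [hw'j]; linarith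
      · rw [hw'ne i hij]; exact hpos i h1 h2
  -- force identities
  have hj1' : j - 1 + 1 = j := by omega
  have hfjm' : force h γ g c α w' (j-1) = fjm + ε/h := by
    rw [hfjm_def]
    unfold force
    rw [hj1', hw'j, hw'ne (j-1) (by omega)]
    field_simp
    ring
  have hfj' : force h γ g c α w' j = fj + ε*(γ - 1/h) := by
    rw [hfj_def]
    unfold force
    rw [hw'j, hw'ne (j+1) (by omega)]
    field_simp
    ring
  have hforce_eq : ∀ i, i ≠ j - 1 → i ≠ j → force h γ g c α w' i = force h γ g c α wstar i := by
    intro i hi1 hi2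
    unfold force
    rw [hw'ne i hi2, hw'ne (i+1) (by omega)]
  -- difference of first sums
  have hjIcc : j ∈ Finset.Icc 2 (n-1) := Finset.mem_Icc.mpr ⟨hj1, hj2⟩
  have hS1 : (∑ i ∈ Finset.Icc 2 (n-1), (η*lam*M*γ*(w' i) + 1/Real.sqrt (2*(w' i))))
      - (∑ i ∈ Finset.Icc 2 (n-1), (η*lam*M*γ*(wstar i) + 1/Real.sqrt (2*(wstar i))))
      = (η*lam*M*γ*(wstar j + ε) + 1/Real.sqrt (2*(wstar j + ε)))
        - (η*lam*M*γ*(wstar j) + 1/Real.sqrt (2*(wstar j))) := by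
    rw [sum_diff_one (Finset.Icc 2 (n-1)) j hjIcc _ _
      (fun i _ hi => by rw [hw'ne i hi]), hw'j]
  -- difference of second sums
  have hjmIcc : j - 1 ∈ Finset.Icc 1 (n-1) := Finset.mem_Icc.mpr ⟨by omega, by omega⟩
  have hjIcc2 : j ∈ Finset.Icc 1 (n-1) := Finset.mem_Icc.mpr ⟨by omega, hj2⟩
  have hmax1 : max 0 (force h γ g c α w' (j-1)) = 0 := by
    rw [hfjm']
    apply max_eq_left
    have : ε / h ≤ -fjm := (div_le_iff₀ hh).mpr (by linarith)
    linarith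
  have hmax1' : max 0 fjm = 0 := max_eq_left (le_of_lt hf1)
  have hmax2 : max 0 (force h γ g c α w' j) = fj + ε*(γ - 1/h) := by
    rw [hfj']
    apply max_eq_right
    have : ε * (1/h - γ) ≤ fj := by
      calc ε * (1/h - γ) ≤ ((1/h - γ)⁻¹ * fj) * (1/h - γ) := by
            apply mul_le_mul_of_nonneg_right hεC (le_of_lt hd)
        _ = fj := by
            rw [mul_comm ((1/h - γ)⁻¹) fj, mul_assoc, inv_mul_cancel₀ (ne_of_gt hd), mul_one]
    linarith
  have hmax2' : max 0 fj = fj := max_eq_right (le_of_lt hf2)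
  have hS2 : (∑ i ∈ Finset.Icc 1 (n-1), max 0 (force h γ g c α w' i))
      - (∑ i ∈ Finset.Icc 1 (n-1), max 0 (force h γ g c α wstar i))
      = ε*(γ - 1/h) := by
    rw [sum_diff_two (Finset.Icc 1 (n-1)) (j-1) j hjmIcc hjIcc2 (by omega) _ _
      (fun i _ hi1 hi2 => by rw [hforce_eq i hi1 hi2])]
    rw [hmax1, hmax2, ← hfjm_def, ← hfj_def, hmax1', hmax2']
    ring
  -- sqrt term is non-increasing
  have hsqrt : 1/Real.sqrt (2*(wstar j + ε)) ≤ 1/Real.sqrt (2*(wstar j)) := by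
    apply one_div_le_one_div_of_le
    · exact Real.sqrt_pos.mpr (by linarith)
    · exact Real.sqrt_le_sqrt (by linarith)
  -- total difference
  have hdiff : Fobj n h γ g c M lam η α w' - Fobj n h γ g c M lam η α wstar
      = (η*lam*M*γ*ε + (1/Real.sqrt (2*(wstar j + ε)) - 1/Real.sqrt (2*(wstar j))))
        + (1-η)*lam*M*(ε*(γ - 1/h)) := by
    unfold Fobj
    rw [← hS2]
    have := hS1
    ring_nf
    ring_nf at this hS2 ⊢
    linarith [hS2, this]
  have hneg : Fobj n h γ g c M lam η α w' - Fobj n h γ g c M lam η α wstar < 0 := by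
    rw [hdiff]
    have hγlt : γ - (1-η)/h < 0 := by linarith
    have hcoef : η*γ + (1-η)*(γ - 1/h) < 0 := by
      have : η*γ + (1-η)*(γ - 1/h) = γ - (1-η)/h + η * 0 := by field_simp; ring
      rw [this]; linarith
    have h1 : η*lam*M*γ*ε + (1-η)*lam*M*(ε*(γ - 1/h)) < 0 := by
      have : η*lam*M*γ*ε + (1-η)*lam*M*(ε*(γ - 1/h))
          = (lam*M*ε) * (η*γ + (1-η)*(γ - 1/h)) := by ring
      rw [this]
      exact mul_neg_of_pos_of_neg (by positivity) hcoef
    linarith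
  have := hmin w' hmem'
  linarith
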